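/- Let D̃(y) be the 4×4 real matrix whose columns are, in order, y, iy, jy, ky, and let P = diag(1,−1,1,1). Then the two continuous maps from S³ = {y ∈ ℝ⁴ : |y| = 1} into SO(6) given by y ↦ diag(D̃(y), I₂) and y ↦ diag(P⁻¹·D̃(y)·P, I₂) (block-diagonal 6×6 matrices with identity 2×2 block in the lower right) are homotopic through continuous maps from S³ into SO(6). -/

import Mathlib

open Matrix

/-- The matrix `D̃(y)` whose columns are `y, iy, jy, ky` (quaternion multiplication). -/
def Dtilde (y : EuclideanSpace ℝ (Fin 4)) : Matrix (Fin 4) (Fin 4) ℝ :=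
  !![y 0, -y 1, -y 2, -y 3;
     y 1,  y 0,  y 3, -y 2;
     y 2, -y 3,  y 0,  y 1;
     y 3,  y 2, -y 1,  y 0]

/-- The matrix `P = diag(1, -1, 1, 1)`. -/
def P : Matrix (Fin 4) (Fin 4) ℝ := Matrix.diagonal ![1, -1, 1, 1]

/-- The block-diagonal `6 × 6` matrix `diag(M, I₂)`. -/
def diagMI₂ (M : Matrix (Fin 4) (Fin 4) ℝ) : Matrix (Fin 6) (Fin 6) ℝ :=
  !![M 0 0, M 0 1, M 0 2, M 0 3, 0, 0;
     M 1 0, M 1 1, M 1 2, M 1 3, 0, 0;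
     M 2 0, M 2 1, M 2 2, M 2 3, 0, 0;
     M 3 0, M 3 1, M 3 2, M 3 3, 0, 0;
     0, 0, 0, 0, 1, 0;
     0, 0, 0, 0, 0, 1]

set_option maxHeartbeats 4000000

lemma vec6_five {α : Type*} (a b c d e f : α) : ![a,b,c,d,e,f] (5 : Fin 6) = f := rfl

lemma cons_val_five' {α : Type*} (x : α) (u : Fin 5 → α) : Matrix.vecCons x u 5 = u 4 := rfl

/-- The rotation path in `SO(6)`, rotating in the plane of coordinates 1 and 4. -/
noncomputable def Rrot (t : ℝ) : Matrix (Fin 6) (Fin 6) ℝ :=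
  !![1, 0, 0, 0, 0, 0;
     0, Real.cos (Real.pi * t), 0, 0, -Real.sin (Real.pi * t), 0;
     0, 0, 1, 0, 0, 0;
     0, 0, 0, 1, 0, 0;
     0, Real.sin (Real.pi * t), 0, 0, Real.cos (Real.pi * t), 0;
     0, 0, 0, 0, 0, 1]

lemma Rrot_continuous : Continuous Rrot := by
  apply continuous_matrix
  intro i j
  fin_cases i <;> fin_cases j <;>
    simp [Rrot, vec6_five, cons_val_five', Matrix.vecHead, Matrix.vecTail, Function.comp] <;>
    fun_prop

lemma Rrot_orth (t : ℝ) : (Rrot t)ᵀ * Rrot t = 1 := by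
  have h := Real.sin_sq_add_cos_sq (Real.pi * t)
  ext i j
  fin_cases i <;> fin_cases j <;>
    simp [Rrot, Matrix.mul_apply, Fin.sum_univ_succ, Matrix.one_apply, vec6_five,
      cons_val_five', Matrix.vecHead, Matrix.vecTail, Function.comp] <;>
    nlinarith [h]

lemma Rrot_orth' (t : ℝ) : Rrot t * (Rrot t)ᵀ = 1 :=
  mul_eq_one_comm.mp (Rrot_orth t)

lemma sphere_sum_sq (y : Metric.sphere (0 : EuclideanSpace ℝ (Fin 4)) 1) :
    ((y : EuclideanSpace ℝ (Fin 4)) 0) ^ 2 + ((y : EuclideanSpace ℝ (Fin 4)) 1) ^ 2 +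
    ((y : EuclideanSpace ℝ (Fin 4)) 2) ^ 2 + ((y : EuclideanSpace ℝ (Fin 4)) 3) ^ 2 = 1 := by
  have hn : ‖(y : EuclideanSpace ℝ (Fin 4))‖ = 1 := by
    simpa using mem_sphere_zero_iff_norm.mp y.2
  rw [EuclideanSpace.norm_eq] at hn
  have := Real.sqrt_eq_one.mp hn
  simpa [Fin.sum_univ_four, Real.norm_eq_abs, sq_abs] using this

lemma diagB_orth (y : Metric.sphere (0 : EuclideanSpace ℝ (Fin 4)) 1) :
    (diagMI₂ (Dtilde ↑y))ᵀ * diagMI₂ (Dtilde ↑y) = 1 := by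
  have h := sphere_sum_sq y
  ext i j
  fin_cases i <;> fin_cases j <;>
    simp [diagMI₂, Dtilde, Matrix.mul_apply, Fin.sum_univ_succ, Matrix.one_apply, vec6_five,
      cons_val_five', Matrix.vecHead, Matrix.vecTail, Function.comp] <;>
    nlinarith [h]

lemma diagB_continuous :
    Continuous fun y : Metric.sphere (0 : EuclideanSpace ℝ (Fin 4)) 1 =>
      diagMI₂ (Dtilde ↑y) := by
  have hc : ∀ k, Continuous fun y : Metric.sphere (0 : EuclideanSpace ℝ (Fin 4)) 1 =>
      (y : EuclideanSpace ℝ (Fin 4)) k :=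
    fun k => (EuclideanSpace.proj k).continuous.comp continuous_subtype_val
  apply continuous_matrix
  intro i j
  fin_cases i <;> fin_cases j <;>
    simp [diagMI₂, Dtilde, vec6_five, cons_val_five', Matrix.vecHead, Matrix.vecTail,
      Function.comp] <;>
    first
      | exact continuous_const
      | exact hc _
      | exact (hc _).neg

lemma diagB_det (y : Metric.sphere (0 : EuclideanSpace ℝ (Fin 4)) 1) :
    (diagMI₂ (Dtilde ↑y)).det = 1 := by
  have h := sphere_sum_sq y
  have hb : diagMI₂ (Dtilde ↑y) =
      (Matrix.fromBlocks (Dtilde ↑y) 0 0 (1 : Matrix (Fin 2) (Fin 2) ℝ)).submatrix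
        finSumFinEquiv.symm finSumFinEquiv.symm := by
    ext i j
    fin_cases i <;> fin_cases j <;> rfl
  rw [hb, Matrix.det_submatrix_equiv_self, Matrix.det_fromBlocks_zero₂₁, Matrix.det_one, mul_one]
  simp [Dtilde, Matrix.det_succ_row_zero, Fin.sum_univ_succ, Fin.succAbove,
    show ((2 : Fin 3).castSucc = (2 : Fin 4)) from rfl]
  nlinarith [h, sq_nonneg (((y : EuclideanSpace ℝ (Fin 4)) 0) ^ 2 +
    ((y : EuclideanSpace ℝ (Fin 4)) 1) ^ 2 + ((y : EuclideanSpace ℝ (Fin 4)) 2) ^ 2 +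
    ((y : EuclideanSpace ℝ (Fin 4)) 3) ^ 2)]

lemma conj_key (A B : Matrix (Fin 6) (Fin 6) ℝ) (h1 : Aᵀ * A = 1) (h2 : A * Aᵀ = 1)
    (h3 : Bᵀ * B = 1) : (Aᵀ * B * A)ᵀ * (Aᵀ * B * A) = 1 := by
  have ht : (Aᵀ * B * A)ᵀ = Aᵀ * Bᵀ * A := by
    simp [Matrix.transpose_mul, Matrix.mul_assoc]
  rw [ht]
  simp only [Matrix.mul_assoc]
  rw [← Matrix.mul_assoc A Aᵀ, h2, Matrix.one_mul, ← Matrix.mul_assoc Bᵀ B, h3,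
    Matrix.one_mul, h1]

lemma conj_det (A B : Matrix (Fin 6) (Fin 6) ℝ) (h1 : Aᵀ * A = 1) (hB : B.det = 1) :
    (Aᵀ * B * A).det = 1 := by
  have h4 : A.det * A.det = 1 := by
    have h5 : Aᵀ.det * A.det = 1 := by rw [← Matrix.det_mul, h1, Matrix.det_one]
    rwa [Matrix.det_transpose] at h5
  rw [Matrix.det_mul, Matrix.det_mul, Matrix.det_transpose, hB]
  linear_combination h4

lemma Rrot_zero : Rrot 0 = 1 := by
  ext i j
  fin_cases i <;> fin_cases j <;>
    simp [Rrot, Matrix.one_apply, vec6_five, cons_val_five', Matrix.vecHead, Matrix.vecTail,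
      Function.comp]

lemma Rrot_one_conj (y : Metric.sphere (0 : EuclideanSpace ℝ (Fin 4)) 1) :
    (Rrot 1)ᵀ * diagMI₂ (Dtilde ↑y) * Rrot 1 = diagMI₂ (P⁻¹ * Dtilde ↑y * P) := by
  have hPP : P * P = 1 := by
    ext i j
    fin_cases i <;> fin_cases j <;>
      simp [P, Matrix.mul_apply, Fin.sum_univ_succ, Matrix.one_apply, Matrix.diagonal,
        Matrix.vecHead, Matrix.vecTail, Function.comp]
  rw [Matrix.inv_eq_right_inv hPP]
  ext i j
  fin_cases i <;> fin_cases j <;>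
    simp [Rrot, P, diagMI₂, Dtilde, Matrix.mul_apply, Fin.sum_univ_succ, Matrix.diagonal,
      vec6_five, cons_val_five', Matrix.vecHead, Matrix.vecTail, Function.comp,
      Real.cos_pi, Real.sin_pi] <;> ring

noncomputable def Hfun
    (p : unitInterval × Metric.sphere (0 : EuclideanSpace ℝ (Fin 4)) 1) :
    Matrix (Fin 6) (Fin 6) ℝ :=
  (Rrot p.1)ᵀ * diagMI₂ (Dtilde ↑p.2) * Rrot p.1

/-- The maps `y ↦ diag(D̃(y), I₂)` and `y ↦ diag(P⁻¹·D̃(y)·P, I₂)` from `S³` into `SO(6)`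
are homotopic through maps into `SO(6)`. -/
theorem stmt_4 :
    ∃ H : unitInterval × Metric.sphere (0 : EuclideanSpace ℝ (Fin 4)) 1 →
        Matrix (Fin 6) (Fin 6) ℝ,
      Continuous H ∧ (∀ p, (H p)ᵀ * H p = 1 ∧ (H p).det = 1) ∧
      (∀ y, H (0, y) = diagMI₂ (Dtilde ↑y)) ∧
      (∀ y, H (1, y) = diagMI₂ (P⁻¹ * Dtilde ↑y * P)) := by
  refine ⟨Hfun, ?_, ?_, ?_, ?_⟩
  · have h1 : Continuous fun p : unitInterval × Metric.sphere (0 : EuclideanSpace ℝ (Fin 4)) 1 =>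
        Rrot (p.1 : ℝ) :=
      Rrot_continuous.comp (continuous_subtype_val.comp continuous_fst)
    have h2 : Continuous fun p : unitInterval × Metric.sphere (0 : EuclideanSpace ℝ (Fin 4)) 1 =>
        diagMI₂ (Dtilde ↑p.2) := diagB_continuous.comp continuous_snd
    exact (h1.matrix_transpose.matrix_mul h2).matrix_mul h1
  · intro p
    unfold Hfun
    have hA : (Rrot (p.1 : ℝ))ᵀ * Rrot (p.1 : ℝ) = 1 := Rrot_orth _
    have hA' : Rrot (p.1 : ℝ) * (Rrot (p.1 : ℝ))ᵀ = 1 := Rrot_orth' _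
    have hB : (diagMI₂ (Dtilde ↑p.2))ᵀ * diagMI₂ (Dtilde ↑p.2) = 1 := diagB_orth p.2
    have hBd : (diagMI₂ (Dtilde ↑p.2)).det = 1 := diagB_det p.2
    exact ⟨conj_key _ _ hA hA' hB, conj_det _ _ hA hBd⟩
  · intro y
    unfold Hfun
    have h0 : (((0 : unitInterval), y).1 : ℝ) = 0 := rfl
    rw [h0, Rrot_zero, Matrix.transpose_one, Matrix.one_mul, Matrix.mul_one]
  · intro y
    unfold Hfun
    have h1 : (((1 : unitInterval), y).1 : ℝ) = 1 := rfl
    rw [h1]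
    exact Rrot_one_conj y
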